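/- Let X = {x_1,…,x_m} and Y = {y_1,…,y_n} be disjoint sets of propositional variables and let Φ = c_1 ∨ ⋯ ∨ c_k be a DNF over X ∪ Y, where each c_i is a conjunction of literals a_{i,1},…,a_{i,l_i}. Let QBF_guess be the program consisting of the rules x_j v ¬x_j (empty body) for each x_j ∈ X, and let QBF_check be the program consisting of the rules y_j v ¬y_j for each y_j ∈ Y together with a constraint with empty head and positive body {a_{i,1},…,a_{i,l_i}} for each disjunct c_i. Then: (1) the answer sets of QBF_guess are exactly the sets S_σ = { x_j : σ(x_j) = true } ∪ { ¬x_j : σ(x_j) = false } for truth assignments σ to X; and (2) for every such answer set S_σ, the program QBF_check ∪ S_σ (QBF_check extended with the literals of S_σ as facts) has no answer set if and only if every truth assignment to Y satisfies Φ under σ, i.e., Φ[X/σ(X)] is a tautology over Y. -/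
import Mathlib


open scoped Classical

namespace ASP

universe u v

/-- A ground literal: an atom together with a sign
(`true` for the atom itself, `false` for its strong negation `¬a`).
The atom `|l|` of a literal `l` is its first component `l.1`. -/
abbrev Lit (α : Type u) : Type u := α × Bool

/-- A ground disjunctive rule, consisting of three finite sets of literals:
head, positive body and negative body. -/
structure Rule (α : Type u) : Type u where
  head : Finset (Lit α)
  pbody : Finset (Lit α)
  nbody : Finset (Lit α)
deriving DecidableEq

variable {α : Type u}

/-- A set of literals is consistent if it contains no atom together with
its strong negation. -/
def Consistent (S : Set (Lit α)) : Prop :=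
  ∀ a : α, ¬((a, true) ∈ S ∧ (a, false) ∈ S)

/-- `S` satisfies a rule `r`: the head intersects `S` whenever
`pbody(r) ⊆ S` and `nbody(r) ∩ S = ∅`. -/
def SatRule (S : Set (Lit α)) (r : Rule α) : Prop :=
  ((∀ l ∈ r.pbody, l ∈ S) ∧ (∀ l ∈ r.nbody, l ∉ S)) → ∃ l ∈ r.head, l ∈ S

/-- Answer sets of a positive program: `⊆`-minimal consistent sets of
literals satisfying all rules. -/
def IsAnswerSetPos (P : Set (Rule α)) (S : Set (Lit α)) : Prop :=
  Consistent S ∧ (∀ r ∈ P, SatRule S r) ∧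
    ∀ T : Set (Lit α), Consistent T → (∀ r ∈ P, SatRule T r) → T ⊆ S → T = S

/-- The reduct `Π^S` of a program w.r.t. a set of literals `S`. -/
def reduct (P : Set (Rule α)) (S : Set (Lit α)) : Set (Rule α) :=
  {x | ∃ r ∈ P, (∀ l ∈ r.nbody, l ∉ S) ∧ x = ⟨r.head, r.pbody, ∅⟩}

/-- `S` is an answer set of `P` iff `S` is an answer set of the positive
program `P^S`. -/
def IsAnswerSet (P : Set (Rule α)) (S : Set (Lit α)) : Prop :=
  IsAnswerSetPos (reduct P S) S

/-- `Lit(Π)`: the literals occurring in a program. -/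
def litsOf (P : Set (Rule α)) : Set (Lit α) :=
  {l | ∃ r ∈ P, l ∈ r.head ∨ l ∈ r.pbody ∨ l ∈ r.nbody}

/-- Edges of the positive dependency graph: from each head literal of a
rule to each of its positive body literals. -/
def DepEdge (P : Set (Rule α)) (l l' : Lit α) : Prop :=
  ∃ r ∈ P, l ∈ r.head ∧ l' ∈ r.pbody

/-- Head-cycle freeness: no two distinct literals occurring together in
some rule head lie on a common cycle of the positive dependency graph. -/
def HeadCycleFree (P : Set (Rule α)) : Prop :=
  ∀ r ∈ P, ∀ l ∈ r.head, ∀ l' ∈ r.head, l ≠ l' →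
    ¬(Relation.ReflTransGen (DepEdge P) l l' ∧ Relation.ReflTransGen (DepEdge P) l' l)

/-- `P ∪ S`: the program `P` extended with the literals of `S` as facts. -/
def withFacts (P : Set (Rule α)) (S : Set (Lit α)) : Set (Rule α) :=
  P ∪ {x | ∃ l ∈ S, x = ⟨{l}, ∅, ∅⟩}

/-- The guessing program for a QBF `∃X ∀Y Φ`: rules `x v ¬x.` for `x ∈ X`. -/
def qbfGuess {V : Type u} [DecidableEq V] (X : Finset V) : Set (Rule V) :=
  {r | ∃ x ∈ X, r = ⟨{(x, true), (x, false)}, ∅, ∅⟩}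

/-- The checking program: rules `y v ¬y.` for `y ∈ Y` together with a
constraint `:- c` for each disjunct `c` of the DNF `Φ`. -/
def qbfCheck {V : Type u} [DecidableEq V] (Y : Finset V)
    (C : Finset (Finset (Lit V))) : Set (Rule V) :=
  {r | ∃ y ∈ Y, r = ⟨{(y, true), (y, false)}, ∅, ∅⟩} ∪
  {r | ∃ c ∈ C, r = ⟨∅, c, ∅⟩}

/-- The set of literals `S_σ` representing a truth assignment `σ` to `X`. -/
def assignSet {V : Type u} [DecidableEq V] (X : Finset V) (σ : V → Bool) :
    Set (Lit V) :=
  {l | l.1 ∈ X ∧ l.2 = σ l.1}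

section AuxLemmas

lemma rule_eta (r : Rule α) (h : r.nbody = ∅) : (⟨r.head, r.pbody, ∅⟩ : Rule α) = r := by
  obtain ⟨h1, h2, h3⟩ := r
  simp only at h
  subst h
  rfl

lemma reduct_of_pos (P : Set (Rule α)) (S : Set (Lit α))
    (h : ∀ r ∈ P, r.nbody = ∅) : reduct P S = P := by
  ext x
  constructor
  · rintro ⟨r, hr, -, rfl⟩
    rw [rule_eta r (h r hr)]
    exact hr
  · intro hx
    exact ⟨x, hx, by simp [h x hx], (rule_eta x (h x hx)).symm⟩

lemma sat_choice [DecidableEq α] {S : Set (Lit α)} {x : α} (h : (x, true) ∈ S ∨ (x, false) ∈ S) :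
    SatRule S ⟨{(x, true), (x, false)}, ∅, ∅⟩ := by
  intro _
  rcases h with h | h
  · exact ⟨(x, true), by simp, h⟩
  · exact ⟨(x, false), by simp, h⟩

lemma choice_of_sat [DecidableEq α] {S : Set (Lit α)} {x : α}
    (h : SatRule S ⟨{(x, true), (x, false)}, ∅, ∅⟩) :
    (x, true) ∈ S ∨ (x, false) ∈ S := by
  obtain ⟨l, hl, hlS⟩ := h ⟨by simp, by simp⟩
  simp only [Finset.mem_insert, Finset.mem_singleton] at hl
  rcases hl with rfl | rfl
  · exact Or.inl hlS
  · exact Or.inr hlS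

lemma assign_consistent {V : Type u} [DecidableEq V] (X : Finset V) (σ : V → Bool) :
    Consistent (assignSet X σ) := by
  rintro a ⟨h1, h2⟩
  exact Bool.noConfusion (h1.2.trans h2.2.symm)

end AuxLemmas

/-- (1) The answer sets of `QBF_guess` are exactly the sets `S_σ` for truth
assignments `σ` to `X`; (2) for every such `S_σ`, `QBF_check ∪ S_σ` has no
answer set iff every assignment to `Y` satisfies `Φ` under `σ`, i.e.,
`Φ[X/σ(X)]` is a tautology over `Y`. -/
theorem statement13 {V : Type u} [DecidableEq V] (X Y : Finset V)
    (hXY : Disjoint X Y) (C : Finset (Finset (Lit V)))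
    (hC : ∀ c ∈ C, ∀ l ∈ c, l.1 ∈ X ∪ Y) :
    (∀ S : Set (Lit V),
      IsAnswerSet (qbfGuess X) S ↔ ∃ σ : V → Bool, S = assignSet X σ) ∧
    (∀ σ : V → Bool,
      ((¬∃ T, IsAnswerSet (withFacts (qbfCheck Y C) (assignSet X σ)) T) ↔
        ∀ τ : V → Bool, ∃ c ∈ C, ∀ l ∈ c,
          l.2 = (if l.1 ∈ X then σ l.1 else τ l.1))) := by
  classical
  have hd := Finset.disjoint_left.mp hXY
  constructor
  · -- Part 1
    intro S
    have hpos : ∀ r ∈ qbfGuess X, r.nbody = ∅ := by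
      rintro r ⟨x, hx, rfl⟩; rfl
    rw [IsAnswerSet, reduct_of_pos _ _ hpos]
    constructor
    · rintro ⟨hcons, hsat, hmin⟩
      set σ : V → Bool := fun v => if (v, true) ∈ S then true else false with hσ
      have key : ∀ v ∈ X, (v, σ v) ∈ S := by
        intro v hv
        rcases choice_of_sat (hsat _ ⟨v, hv, rfl⟩) with h | h
        · have hv' : σ v = true := by simp only [hσ]; rw [if_pos h]
          rw [hv']; exact h
        · by_cases h1 : (v, true) ∈ S
          · have hv' : σ v = true := by simp only [hσ]; rw [if_pos h1]
            rw [hv']; exact h1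
          · have hv' : σ v = false := by simp only [hσ]; rw [if_neg h1]
            rw [hv']; exact h
      have hsub : assignSet X σ ⊆ S := by
        rintro ⟨a, b⟩ ⟨ha, hb⟩
        simp only at ha hb
        subst hb
        exact key a ha
      have hsatA : ∀ r ∈ qbfGuess X, SatRule (assignSet X σ) r := by
        rintro r ⟨x, hx, rfl⟩
        apply sat_choice
        cases h : σ x
        · exact Or.inr ⟨hx, h.symm⟩
        · exact Or.inl ⟨hx, h.symm⟩
      exact ⟨σ, (hmin _ (assign_consistent X σ) hsatA hsub).symm⟩
    · rintro ⟨σ, rfl⟩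
      refine ⟨assign_consistent X σ, ?_, ?_⟩
      · rintro r ⟨x, hx, rfl⟩
        apply sat_choice
        cases h : σ x
        · exact Or.inr ⟨hx, h.symm⟩
        · exact Or.inl ⟨hx, h.symm⟩
      · intro T hTc hTsat hTsub
        refine Set.Subset.antisymm hTsub ?_
        rintro ⟨a, b⟩ ⟨ha, hb⟩
        simp only at ha hb
        subst hb
        rcases choice_of_sat (hTsat _ ⟨a, ha, rfl⟩) with h | h
        · have := (hTsub h).2
          simp only at this
          rwa [← this]
        · have := (hTsub h).2
          simp only at this
          rwa [← this]
  · -- Part 2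
    intro σ
    set P : Set (Rule V) := withFacts (qbfCheck Y C) (assignSet X σ) with hP
    have hpos : ∀ r ∈ P, r.nbody = ∅ := by
      rintro r ((⟨y, hy, rfl⟩ | ⟨c, hc, rfl⟩) | ⟨l, hl, rfl⟩) <;> rfl
    set U : (V → Bool) → Set (Lit V) := fun τ => assignSet X σ ∪ assignSet Y τ with hU
    have hUcons : ∀ τ, Consistent (U τ) := by
      rintro τ a ⟨h1, h2⟩
      rcases h1 with h1 | h1 <;> rcases h2 with h2 | h2 <;>
        first
          | exact hd h1.1 h2.1
          | exact hd h2.1 h1.1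
          | exact Bool.noConfusion (h1.2.trans h2.2.symm)
    have hlink : ∀ τ, ∀ c ∈ C,
        ((∀ l ∈ c, l ∈ U τ) ↔ ∀ l ∈ c, l.2 = (if l.1 ∈ X then σ l.1 else τ l.1)) := by
      intro τ c hc
      constructor
      · intro h l hl
        rcases h l hl with ⟨hX1, hb⟩ | ⟨hY1, hb⟩
        · rw [if_pos hX1]; exact hb
        · rw [if_neg (fun hx => hd hx hY1)]; exact hb
      · intro h l hl
        have hle := h l hl
        rcases Finset.mem_union.mp (hC c hc l hl) with hX1 | hY1
        · exact Or.inl ⟨hX1, by rwa [if_pos hX1] at hle⟩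
        · exact Or.inr ⟨hY1, by rwa [if_neg (fun hx => hd hx hY1)] at hle⟩
    have hUsat : ∀ τ, (∀ c ∈ C, ¬(∀ l ∈ c, l ∈ U τ)) → ∀ r ∈ P, SatRule (U τ) r := by
      rintro τ hnc r ((⟨y, hy, rfl⟩ | ⟨c, hc, rfl⟩) | ⟨l, hl, rfl⟩)
      · apply sat_choice
        cases h : τ y
        · exact Or.inr (Set.mem_union_right _ ⟨hy, h.symm⟩)
        · exact Or.inl (Set.mem_union_right _ ⟨hy, h.symm⟩)
      · rintro ⟨hp, -⟩
        exact absurd (fun l hl => hp l hl) (hnc c hc)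
      · intro _
        exact ⟨l, Finset.mem_singleton_self l, Set.mem_union_left _ hl⟩
    have hUsub : ∀ τ (T : Set (Lit V)), (∀ r ∈ P, SatRule T r) → T ⊆ U τ → U τ ⊆ T := by
      rintro τ T hTsat hTsub ⟨a, b⟩ hab
      rcases hab with ⟨hX1, hb⟩ | ⟨hY1, hb⟩
      · simp only at hX1 hb
        subst hb
        have hr : (⟨{(a, σ a)}, ∅, ∅⟩ : Rule V) ∈ P :=
          Set.mem_union_right _ ⟨(a, σ a), ⟨hX1, rfl⟩, rfl⟩
        obtain ⟨l', hl', hl'T⟩ := hTsat _ hr ⟨by simp, by simp⟩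
        rw [Finset.mem_singleton] at hl'
        subst hl'
        exact hl'T
      · simp only at hY1 hb
        subst hb
        have hr : (⟨{(a, true), (a, false)}, ∅, ∅⟩ : Rule V) ∈ P :=
          Set.mem_union_left _ (Set.mem_union_left _ ⟨a, hY1, rfl⟩)
        rcases choice_of_sat (hTsat _ hr) with h | h
        · rcases hTsub h with ⟨hx, he⟩ | ⟨-, he⟩
          · exact absurd hY1 (hd hx)
          · simp only at he
            rwa [← he]
        · rcases hTsub h with ⟨hx, he⟩ | ⟨-, he⟩
          · exact absurd hY1 (hd hx)
          · simp only at he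
            rwa [← he]
    constructor
    · intro hno τ
      by_contra hcon
      push_neg at hcon
      apply hno
      refine ⟨U τ, ?_⟩
      rw [IsAnswerSet, reduct_of_pos _ _ hpos]
      have hnc : ∀ c ∈ C, ¬(∀ l ∈ c, l ∈ U τ) := by
        intro c hc h
        obtain ⟨l, hl, hne⟩ := hcon c hc
        exact hne ((hlink τ c hc).mp h l hl)
      exact ⟨hUcons τ, hUsat τ hnc,
        fun T hTc hTs hTsub => Set.Subset.antisymm hTsub (hUsub τ T hTs hTsub)⟩
    · rintro htaut ⟨T, hT⟩
      rw [IsAnswerSet, reduct_of_pos _ _ hpos] at hT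
      obtain ⟨hTc, hTsat, hTmin⟩ := hT
      set τ : V → Bool := fun y => if (y, true) ∈ T then true else false with hτ
      have hsub : U τ ⊆ T := by
        rintro ⟨a, b⟩ hab
        rcases hab with ⟨hX1, hb⟩ | ⟨hY1, hb⟩
        · simp only at hX1 hb
          subst hb
          have hr : (⟨{(a, σ a)}, ∅, ∅⟩ : Rule V) ∈ P :=
            Set.mem_union_right _ ⟨(a, σ a), ⟨hX1, rfl⟩, rfl⟩
          obtain ⟨l', hl', hl'T⟩ := hTsat _ hr ⟨by simp, by simp⟩
          rw [Finset.mem_singleton] at hl'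
          subst hl'
          exact hl'T
        · simp only at hY1 hb
          subst hb
          have hr : (⟨{(a, true), (a, false)}, ∅, ∅⟩ : Rule V) ∈ P :=
            Set.mem_union_left _ (Set.mem_union_left _ ⟨a, hY1, rfl⟩)
          by_cases h1 : (a, true) ∈ T
          · have hτa : τ a = true := by simp only [hτ]; rw [if_pos h1]
            rw [hτa]; exact h1
          · rcases choice_of_sat (hTsat _ hr) with h | h
            · exact absurd h h1
            · have hτa : τ a = false := by simp only [hτ]; rw [if_neg h1]
              rw [hτa]; exact h
      obtain ⟨c, hc, hcl⟩ := htaut τ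
      have hcU : ∀ l ∈ c, l ∈ U τ := (hlink τ c hc).mpr hcl
      have hr : (⟨∅, c, ∅⟩ : Rule V) ∈ P :=
        Set.mem_union_left _ (Set.mem_union_right _ ⟨c, hc, rfl⟩)
      obtain ⟨l, hl, -⟩ := hTsat _ hr ⟨fun l hl => hsub (hcU l hl), by simp⟩
      exact absurd hl (Finset.notMem_empty l)

end ASP
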